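/- Let A₁,…,A_{n+2} be points in ℝⁿ in general position and α₁,…,α_{n+2} nonzero reals with Σᵢ αᵢ = 0 and Σᵢ αᵢAᵢ = 0. Let B be the (n+1)×n real matrix whose i-th row is the vector Aᵢ − A_{n+2} (for 1 ≤ i ≤ n+1), and let D be the (n+1)×(n+1) diagonal matrix with diagonal entries α₁,…,α_{n+1}. Define c₀ := 1 and c_k := Σ_{1≤i₁<⋯<i_k≤n+2} α_{i₁}⋯α_{i_k} det(⟨A_{i_a} − P, A_{i_b} − Q⟩)_{1≤a,b≤k} for any choice of P, Q (this is independent of P, Q), and set f(x) := Σ_{i=0}^{n} (−1)^i c_i x^{n−i}. Then the characteristic polynomial of the n×n matrix BᵀDB is f(x), and the characteristic polynomial of the (n+1)×(n+1) matrix BBᵀD is x·f(x) (characteristic polynomial of M meaning det(x·I − M)). -/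

import Mathlib

open Polynomial Matrix

/-- Points `A₁, …, A_m` in `ℝ^d` are in general position if every `d+1` of them are
affinely independent. -/
def InGeneralPosition {d m : ℕ} (A : Fin m → EuclideanSpace ℝ (Fin d)) : Prop :=
  ∀ s : Finset (Fin m), s.card = d + 1 → AffineIndependent ℝ (fun i : ↥s => A i.1)

/-- `c_k = Σ_{i₁<⋯<i_k} α_{i₁}⋯α_{i_k} det(⟨A_{i_a} − P, A_{i_b} − Q⟩)_{a,b}` taken with
`P = Q = 0` (by Lemma 2.3 this quantity is independent of `P` and `Q`); `c₀ = 1`. -/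
noncomputable def cCoeff {d m : ℕ} (A : Fin m → EuclideanSpace ℝ (Fin d))
    (α : Fin m → ℝ) (k : ℕ) : ℝ :=
  ∑ s ∈ Finset.powersetCard k (Finset.univ : Finset (Fin m)),
    (∏ i ∈ s, α i) *
      Matrix.det (Matrix.of fun (a b : ↥s) => (inner ℝ (A a.1) (A b.1) : ℝ))

/-- The characteristic polynomial of the configuration:
`f(x) = c₀xⁿ − c₁x^{n−1} + ⋯ + (−1)ⁿc_n`. -/
noncomputable def charPolyConfig {d m : ℕ} (A : Fin m → EuclideanSpace ℝ (Fin d))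
    (α : Fin m → ℝ) (n : ℕ) : Polynomial ℝ :=
  ∑ i ∈ Finset.range (n + 1), C ((-1 : ℝ) ^ i * cCoeff A α i) * X ^ (n - i)

/-! Let `W` be the `(n+2) × n` matrix with rows `Aᵢ` and `Δ = diag α`. The relations
`Σ αᵢ = 0` and `Σ αᵢ Aᵢ = 0` make `Σ αᵢ (Aᵢ - p)(Aᵢ - p)ᵀ` independent of `p`; for
`p = A_{n+2}` the last term vanishes and one gets `BᵀDB = WᵀΔW`. Moving `W` to the other side,
`X² · χ(WᵀΔW) = χ(W WᵀΔ)`, and `W Wᵀ Δ` is the Gram matrix of the points times `Δ`: its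
`k × k` principal minors sum to `c_k`, which vanishes for `k > n` since `n + 1` vectors of
`ℝⁿ` have singular Gram matrix. The claim for `BBᵀD` follows by moving `B` across once more. -/

open Finset

namespace Matrix

section CommRing

variable {ι n R : Type*} [Fintype ι] [DecidableEq ι] [CommRing R]

theorem charpoly_eq_sum_principal_minors (M : Matrix ι ι R) :
    M.charpoly = ∑ k ∈ range (Fintype.card ι + 1),
      C ((-1) ^ k * ∑ s ∈ univ.powersetCard k,
        (M.submatrix (Subtype.val : s → ι) Subtype.val).det) * X ^ (Fintype.card ι - k) := by
  nontriviality R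
  conv_lhs => rw [M.charpoly.as_sum_range_C_mul_X_pow, M.charpoly_natDegree_eq_dim]
  rw [← sum_range_reflect]
  refine sum_congr rfl fun k hk => ?_
  rw [Nat.add_sub_cancel, charpoly_coeff_eq_sum_minors M k (Nat.lt_succ_iff.mp (mem_range.mp hk))]

theorem det_submatrix_mul_diagonal (G : Matrix ι ι R) (α : ι → R) (s : Finset ι) :
    ((G * diagonal α).submatrix (Subtype.val : s → ι) Subtype.val).det =
      (∏ i ∈ s, α i) * (G.submatrix (Subtype.val : s → ι) Subtype.val).det := by
  have : (G * diagonal α).submatrix (Subtype.val : s → ι) Subtype.val =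
      G.submatrix Subtype.val Subtype.val * diagonal fun i : s => α i := by
    ext
    simp [mul_diagonal]
  rw [this, det_mul, det_diagonal, prod_coe_sort, mul_comm]

theorem transpose_mul_diagonal_mul_sub_replicateRow (V : Matrix ι n R) (α : ι → R) (p : n → R)
    (hα : ∑ i, α i = 0) (hV : ∑ i, α i • V i = 0) :
    (V - replicateRow ι p)ᵀ * diagonal α * (V - replicateRow ι p) = Vᵀ * diagonal α * V := by
  have hV' : ∀ j, ∑ i, α i * V i j = 0 := fun j => by simpa using congrFun hV j
  ext j k
  rw [mul_apply, mul_apply]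
  simp only [mul_diagonal, transpose_apply, sub_apply, replicateRow_apply]
  calc ∑ i, (V i j - p j) * α i * (V i k - p k)
      = ∑ i, V i j * α i * V i k - p k * ∑ i, α i * V i j - p j * ∑ i, α i * V i k
          + p j * p k * ∑ i, α i := by
        simp only [mul_sum, ← sum_sub_distrib, ← sum_add_distrib]
        exact sum_congr rfl fun i _ => by ring
    _ = ∑ i, V i j * α i * V i k := by rw [hV', hV', hα]; ring

theorem transpose_mul_diagonal_mul_of_row_last_eq_zero {m : ℕ} (M : Matrix (Fin (m + 1)) n R)
    (α : Fin (m + 1) → R) (h : M (Fin.last m) = 0) :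
    Mᵀ * diagonal α * M = (M.submatrix Fin.castSucc id)ᵀ *
      diagonal (fun i : Fin m => α i.castSucc) * M.submatrix Fin.castSucc id := by
  ext j k
  rw [mul_apply, mul_apply, Fin.sum_univ_castSucc]
  simp [mul_diagonal, h]

end CommRing

theorem det_gram_eq_zero_of_finrank_lt {𝕜 E ι : Type*} [RCLike 𝕜] [NormedAddCommGroup E]
    [InnerProductSpace 𝕜 E] [FiniteDimensional 𝕜 E] [Fintype ι] [DecidableEq ι] (v : ι → E)
    (h : Module.finrank 𝕜 E < Fintype.card ι) : (gram 𝕜 v).det = 0 := by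
  by_contra hne
  exact h.not_ge (det_gram_ne_zero_iff_linearIndependent.mp hne).fintype_card_le_finrank

theorem gram_euclideanSpace_eq_mul_transpose {ι ν : Type*} [Fintype ν]
    (v : ι → EuclideanSpace ℝ ν) :
    gram ℝ v = of (fun i j => v i j) * (of fun i j => v i j)ᵀ := by
  ext i j
  simp [mul_apply, PiLp.inner_apply, mul_comm]

end Matrix

open Matrix

section Configuration

variable {d m : ℕ} (A : Fin m → EuclideanSpace ℝ (Fin d)) (α : Fin m → ℝ)

theorem sum_principal_minors_gram_mul_diagonal (k : ℕ) :
    ∑ s ∈ univ.powersetCard k,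
      ((gram ℝ A * diagonal α).submatrix (Subtype.val : s → Fin m) Subtype.val).det =
        cCoeff A α k := by
  simp only [det_submatrix_mul_diagonal]
  rfl

theorem cCoeff_eq_zero_of_lt {k : ℕ} (hk : d < k) : cCoeff A α k = 0 := by
  refine sum_eq_zero fun s hs => ?_
  have hcard : Module.finrank ℝ (EuclideanSpace ℝ (Fin d)) < Fintype.card s := by
    rwa [finrank_euclideanSpace_fin, Fintype.card_coe, (mem_powersetCard.mp hs).2]
  rw [← gram, det_gram_eq_zero_of_finrank_lt _ hcard, mul_zero]

theorem charpoly_gram_mul_diagonal (h : d ≤ m) :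
    (gram ℝ A * diagonal α).charpoly = X ^ (m - d) * charPolyConfig A α d := by
  rw [charpoly_eq_sum_principal_minors, Fintype.card_fin]
  simp_rw [sum_principal_minors_gram_mul_diagonal]
  rw [← sum_subset (range_mono (by omega : d + 1 ≤ m + 1)), charPolyConfig, mul_sum]
  · refine sum_congr rfl fun k hk => ?_
    rw [mul_left_comm, ← pow_add]
    congr 2
    have := mem_range.mp hk
    omega
  · intro k _ hk
    rw [cCoeff_eq_zero_of_lt A α (by simpa using hk)]
    simp

end Configuration

theorem charpoly_BtDB_and_BBtD_general {n : ℕ}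
    (A : Fin (n + 2) → EuclideanSpace ℝ (Fin n))
    (α : Fin (n + 2) → ℝ)
    (hsum : ∑ i, α i = 0) (hsum2 : ∑ i, α i • A i = 0)
    (B : Matrix (Fin (n + 1)) (Fin n) ℝ)
    (hB : ∀ (i : Fin (n + 1)) (j : Fin n),
      B i j = A i.castSucc j - A (Fin.last (n + 1)) j)
    (D : Matrix (Fin (n + 1)) (Fin (n + 1)) ℝ)
    (hD : D = Matrix.diagonal (fun i : Fin (n + 1) => α i.castSucc)) :
    Matrix.charpoly (Bᵀ * D * B) = charPolyConfig A α n ∧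
    Matrix.charpoly (B * Bᵀ * D) = X * charPolyConfig A α n := by
  set W : Matrix (Fin (n + 2)) (Fin n) ℝ := of fun i j => A i j
  set Wc := W - replicateRow (Fin (n + 2)) (A (Fin.last (n + 1)))
  have hB' : B = Wc.submatrix Fin.castSucc id := by
    ext i j
    simp [Wc, W, hB]
  have hW : Bᵀ * D * B = Wᵀ * diagonal α * W := by
    have hV : ∑ i, α i • W i = 0 := by
      have h := congrArg WithLp.ofLp hsum2
      simp only [WithLp.ofLp_sum, WithLp.ofLp_smul, WithLp.ofLp_zero] at h
      exact h
    rw [hD, hB', ← transpose_mul_diagonal_mul_of_row_last_eq_zero Wc α (by ext; simp [Wc, W]),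
      transpose_mul_diagonal_mul_sub_replicateRow W α _ hsum hV]
  have hfirst : (Bᵀ * D * B).charpoly = charPolyConfig A α n := by
    refine mul_left_cancel₀ (pow_ne_zero 2 (X_ne_zero (R := ℝ))) ?_
    have hcomm := charpoly_mul_comm_of_le W (Wᵀ * diagonal α) (by simp)
    simp only [Fintype.card_fin, show n + 2 - n = 2 by omega] at hcomm
    rw [hW, ← hcomm, ← Matrix.mul_assoc, ← gram_euclideanSpace_eq_mul_transpose,
      charpoly_gram_mul_diagonal A α (by omega), show n + 2 - n = 2 by omega]
  refine ⟨hfirst, ?_⟩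
  rw [Matrix.mul_assoc B, charpoly_mul_comm_of_le B (Bᵀ * D) (by simp), hfirst]
  simp

/-- With `B` the `(n+1) × n` matrix whose `i`-th row is `Aᵢ − A_{n+2}` and `D` the diagonal
matrix of the `αᵢ` (`1 ≤ i ≤ n+1`), the characteristic polynomial of `BᵀDB` is `f(x)` and
the characteristic polynomial of `BBᵀD` is `x·f(x)`. -/
theorem charpoly_BtDB_and_BBtD {n : ℕ}
    (A : Fin (n + 2) → EuclideanSpace ℝ (Fin n))
    (hgp : InGeneralPosition A)
    (α : Fin (n + 2) → ℝ) (hα : ∀ i, α i ≠ 0)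
    (hsum : ∑ i, α i = 0) (hsum2 : ∑ i, α i • A i = 0)
    (B : Matrix (Fin (n + 1)) (Fin n) ℝ)
    (hB : ∀ (i : Fin (n + 1)) (j : Fin n),
      B i j = A i.castSucc j - A (Fin.last (n + 1)) j)
    (D : Matrix (Fin (n + 1)) (Fin (n + 1)) ℝ)
    (hD : D = Matrix.diagonal (fun i : Fin (n + 1) => α i.castSucc)) :
    Matrix.charpoly (Bᵀ * D * B) = charPolyConfig A α n ∧
    Matrix.charpoly (B * Bᵀ * D) = X * charPolyConfig A α n :=
  charpoly_BtDB_and_BBtD_general A α hsum hsum2 B hB D hD
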